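/- If the three qubit observables M₁, M₂, M₃ are jointly (triplewise) compatible, i.e., all three are post-processings of a single POVM {E_λ}, then tr(X M₁ + Y M₂ + Z M₃) ≤ 6/√3 = 2√3. -/

import Mathlib

open Matrix
open scoped ComplexOrder

noncomputable section

def σX : Matrix (Fin 2) (Fin 2) ℂ := !![0, 1; 1, 0]
def σY : Matrix (Fin 2) (Fin 2) ℂ := !![0, -Complex.I; Complex.I, 0]
def σZ : Matrix (Fin 2) (Fin 2) ℂ := !![1, 0; 0, -1]

/-!
For a Hermitian qubit matrix `E`, its Bloch vector `b(E) = (re tr(X E), re tr(Y E), re tr(Z E))`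
satisfies `|b(E)|² = (tr E)² - 4 det E`, so `|b(E_λ)| ≤ tr E_λ` for every effect `E_λ ≥ 0`.
The witness expands as `∑_λ ⟨c_λ, b(E_λ)⟩` with `c_{λ,x} = p(0|x,λ) - p(1|x,λ) ∈ [-1, 1]`,
so Cauchy–Schwarz bounds each term by `√3 tr E_λ`, and `∑_λ tr E_λ = tr 1 = 2`.
-/

def pauli : Fin 3 → Matrix (Fin 2) (Fin 2) ℂ := ![σX, σY, σZ]

def blochVector (E : Matrix (Fin 2) (Fin 2) ℂ) (i : Fin 3) : ℝ := (pauli i * E).trace.re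

lemma Matrix.IsHermitian.sum_sq_blochVector {E : Matrix (Fin 2) (Fin 2) ℂ} (hE : E.IsHermitian) :
    ∑ i, blochVector E i ^ 2 = E.trace.re ^ 2 - 4 * E.det.re := by
  have h10 : E 1 0 = star (E 0 1) := (hE.apply 1 0).symm
  have h00 : (E 0 0).im = 0 := Complex.conj_eq_iff_im.mp (hE.apply 0 0)
  have h11 : (E 1 1).im = 0 := Complex.conj_eq_iff_im.mp (hE.apply 1 1)
  simp only [blochVector, pauli, σX, σY, σZ, trace_fin_two, det_fin_two, Fin.sum_univ_three,
    Fin.sum_univ_two, Fin.isValue, mul_apply, of_apply, cons_val', cons_val_zero, cons_val_one,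
    cons_val, cons_val_fin_one, h10, h00, h11, RCLike.star_def, Complex.conj_re, Complex.conj_im,
    Complex.add_re, Complex.sub_re, Complex.mul_re, Complex.neg_re, Complex.neg_im,
    Complex.zero_re, Complex.zero_im, Complex.one_re, Complex.one_im, Complex.I_re, Complex.I_im,
    mul_zero, zero_mul, one_mul, mul_neg, neg_mul, neg_zero, add_zero, zero_add, sub_zero,
    zero_sub, sub_self, sub_neg_eq_add]
  ring

lemma Matrix.PosSemidef.sum_sq_blochVector_le {E : Matrix (Fin 2) (Fin 2) ℂ} (hE : E.PosSemidef) :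
    ∑ i, blochVector E i ^ 2 ≤ E.trace.re ^ 2 := by
  linarith [hE.isHermitian.sum_sq_blochVector, (Complex.nonneg_iff.mp hE.det_nonneg).1]

lemma Matrix.PosSemidef.sum_mul_blochVector_le {E : Matrix (Fin 2) (Fin 2) ℂ} (hE : E.PosSemidef)
    (c : Fin 3 → ℝ) : ∑ i, c i * blochVector E i ≤ √(∑ i, c i ^ 2) * E.trace.re := by
  calc ∑ i, c i * blochVector E i ≤ √(∑ i, c i ^ 2) * √(∑ i, blochVector E i ^ 2) :=
        Real.sum_mul_le_sqrt_mul_sqrt _ _ _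
    _ ≤ √(∑ i, c i ^ 2) * E.trace.re := by
        have htr : 0 ≤ E.trace.re := (Complex.nonneg_iff.mp hE.trace_nonneg).1
        gcongr
        exact (Real.sqrt_le_sqrt hE.sum_sq_blochVector_le).trans_eq (Real.sqrt_sq htr)

lemma re_trace_pauli_mul_sum_smul {ι : Type*} [Fintype ι] (i : Fin 3) (r : ι → ℝ)
    (E : ι → Matrix (Fin 2) (Fin 2) ℂ) :
    (pauli i * ∑ l, (r l : ℂ) • E l).trace.re = ∑ l, r l * blochVector (E l) i := by
  simp only [Finset.mul_sum, Matrix.mul_smul, trace_sum, Matrix.trace_smul, Complex.re_sum,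
    smul_eq_mul, Complex.re_ofReal_mul, blochVector]

lemma sq_sub_le_one_of_add_eq_one {a b : ℝ} (ha : 0 ≤ a) (hb : 0 ≤ b) (hab : a + b = 1) :
    (a - b) ^ 2 ≤ 1 := by
  nlinarith

/-- If three qubit observables `M x = M_{0|x} - M_{1|x}` arise from dichotomic POVMs
that are all post-processings of a single parent POVM `{E_λ}` (triplewise compatible),
then `tr(X M₁ + Y M₂ + Z M₃) ≤ 2√3`. -/
theorem triplewise_compatible_witness_bound
    (M : Fin 3 → Matrix (Fin 2) (Fin 2) ℂ)
    (hcompat : ∃ (n : ℕ) (E : Fin n → Matrix (Fin 2) (Fin 2) ℂ)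
        (p : Fin 3 → Fin n → Fin 2 → ℝ),
      (∀ l, (E l).PosSemidef) ∧ (∑ l, E l) = 1 ∧
      (∀ x l a, 0 ≤ p x l a) ∧ (∀ x l, ∑ a, p x l a = 1) ∧
      (∀ x, M x = ∑ l, ((p x l 0 - p x l 1 : ℝ) : ℂ) • E l)) :
    ((σX * M 0 + σY * M 1 + σZ * M 2).trace).re ≤ 2 * Real.sqrt 3 := by
  obtain ⟨n, E, p, hE, hEsum, hp, hpsum, hM⟩ := hcompat
  have hc : ∀ l, ∑ x, (p x l 0 - p x l 1) ^ 2 ≤ 3 := fun l => by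
    have h x : (p x l 0 - p x l 1) ^ 2 ≤ 1 :=
      sq_sub_le_one_of_add_eq_one (hp x l 0) (hp x l 1) (by simpa using hpsum x l)
    calc ∑ x, (p x l 0 - p x l 1) ^ 2 ≤ ∑ _x : Fin 3, (1 : ℝ) :=
          Finset.sum_le_sum fun x _ => h x
      _ = 3 := by norm_num
  calc ((σX * M 0 + σY * M 1 + σZ * M 2).trace).re
      = ∑ x, (pauli x * M x).trace.re := by
        simp [Fin.sum_univ_three, pauli]
    _ = ∑ l, ∑ x, (p x l 0 - p x l 1) * blochVector (E l) x := by
        simp only [hM, re_trace_pauli_mul_sum_smul]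
        exact Finset.sum_comm
    _ ≤ ∑ l, √3 * (E l).trace.re := Finset.sum_le_sum fun l _ =>
        ((hE l).sum_mul_blochVector_le _).trans <| by
          gcongr
          · exact (Complex.nonneg_iff.mp (hE l).trace_nonneg).1
          · exact hc l
    _ = 2 * √3 := by
        rw [← Finset.mul_sum, ← Complex.re_sum, ← trace_sum, hEsum]
        norm_num [trace_one, mul_comm]

end
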